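/- arXiv:2403.04775 — 2 statements merged into one kernel-verified Lean document; each statement's English description precedes it below -/
import Mathlib

section
/- Ground entailment of the empty clause is preserved by grounding: a set N of (possibly non-ground) clauses Herbrand-entails ⊥ (i.e., the set of all ground instances of N is unsatisfiable) if and only if N Tarski-entails ⊥ (N has no first-order model), assuming the signature contains at least one ground term of each type. -/
inductive Tm (V F : Type) : Type
  | var : V → Tm V F
  | app : F → List (Tm V F) → Tm V F

def Tm.subst {V W F : Type} (σ : V → Tm W F) : Tm V F → Tm W F
  | .var x => σ x
  | .app f ts => .app f (ts.attach.map fun t => t.1.subst σ)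
decreasing_by have := List.sizeOf_lt_of_mem t.2; simp [Tm.app.sizeOf_spec]; omega

structure Interp (F : Type) where
  U : Type
  ne : Nonempty U
  fn : F → List U → U

def Tm.eval {V F} (M : Interp F) (ξ : V → M.U) : Tm V F → M.U
  | .var x => ξ x
  | .app f ts => M.fn f (ts.attach.map fun t => t.1.eval M ξ)
decreasing_by have := List.sizeOf_lt_of_mem t.2; simp [Tm.app.sizeOf_spec]; omega

structure Lit (V F : Type) where
  pos : Bool
  lhs : Tm V F
  rhs : Tm V F

def Lit.subst {V W F} (σ : V → Tm W F) (L : Lit V F) : Lit W F :=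
  ⟨L.pos, L.lhs.subst σ, L.rhs.subst σ⟩

def Lit.holds {V F} (M : Interp F) (ξ : V → M.U) (L : Lit V F) : Prop :=
  match L.pos with
  | true => L.lhs.eval M ξ = L.rhs.eval M ξ
  | false => L.lhs.eval M ξ ≠ L.rhs.eval M ξ

abbrev Clause (V F : Type) := List (Lit V F)

def Clause.holds {V F} (M : Interp F) (ξ : V → M.U) (C : Clause V F) : Prop :=
  ∃ L ∈ C, L.holds M ξ

inductive Occurs {V F : Type} (x : V) : Tm V F → Prop
  | var : Occurs x (.var x)
  | app {f ts t} : t ∈ ts → Occurs x t → Occurs x (.app f ts)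

inductive Subterm {V F : Type} : Tm V F → Tm V F → Prop
  | mem {t f ts} : t ∈ ts → Subterm t (.app f ts)
  | step {t s f ts} : Subterm t s → s ∈ ts → Subterm t (.app f ts)

def Tm.size {V F : Type} : Tm V F → Nat
  | .var _ => 1
  | .app _ ts => 1 + (ts.attach.map fun t => t.1.size).sum
decreasing_by have := List.sizeOf_lt_of_mem t.2; simp [Tm.app.sizeOf_spec]; omega

def MulLt {α : Type} (lt : α → α → Prop) (N M : Multiset α) : Prop :=
  ∃ X Y Z : Multiset α, X ≠ 0 ∧ M = Z + X ∧ N = Z + Y ∧ ∀ y ∈ Y, ∃ x ∈ X, lt y x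

/-
A first-order model of N satisfies every ground instance of N, since evaluating Cθ
under no valuation is evaluating C under the valuation x ↦ ⟦xθ⟧. Conversely, a model of the ground
instances restricts to its elements denoted by ground terms; this set is nonempty because a ground
term exists and is closed under the function symbols. In the restricted model every valuation is of
the form x ↦ ⟦xθ⟧ for a grounding substitution θ, so each clause of N holds under it.
-/

namespace Tm

variable {V W F : Type}

theorem eval_app (M : Interp F) (ξ : V → M.U) (f : F) (ts : List (Tm V F)) :
    (app f ts).eval M ξ = M.fn f (ts.map (eval M ξ)) := by
  rw [eval, List.attach_map_val]

theorem subst_app (σ : V → Tm W F) (f : F) (ts : List (Tm V F)) :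
    (app f ts).subst σ = app f (ts.map (subst σ)) := by
  rw [subst, List.attach_map_val]

theorem eval_subst (M : Interp F) (ξ : W → M.U) (σ : V → Tm W F) :
    ∀ t : Tm V F, (t.subst σ).eval M ξ = t.eval M (fun x => (σ x).eval M ξ)
  | .var x => by rw [subst, eval]
  | .app f ts => by
      rw [subst_app, eval_app, eval_app, List.map_map]
      exact congrArg (M.fn f) (List.map_congr_left fun t _ => eval_subst M ξ σ t)

end Tm

theorem Lit.holds_subst {V W F : Type} (M : Interp F) (ξ : W → M.U) (σ : V → Tm W F)
    (L : Lit V F) :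
    (L.subst σ).holds M ξ ↔ L.holds M (fun x => (σ x).eval M ξ) := by
  unfold Lit.holds Lit.subst
  simp only [Tm.eval_subst]

theorem Clause.holds_map_subst {V W F : Type} (M : Interp F) (ξ : W → M.U)
    (σ : V → Tm W F) (C : Clause V F) :
    Clause.holds M ξ (C.map (Lit.subst σ)) ↔ C.holds M (fun x => (σ x).eval M ξ) := by
  simp only [Clause.holds, List.mem_map, exists_exists_and_eq_and, Lit.holds_subst]

namespace Interp

variable {F : Type}

def groundRange (M : Interp F) : Set M.U :=
  Set.range fun t : Tm Empty F => t.eval M Empty.elim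

theorem fn_mem_groundRange (M : Interp F) (f : F) {us : List M.U}
    (hus : ∀ u ∈ us, u ∈ M.groundRange) : M.fn f us ∈ M.groundRange := by
  obtain ⟨ts, rfl⟩ : us ∈ Set.range (List.map fun t : Tm Empty F => t.eval M Empty.elim) := by
    rwa [Set.range_list_map]
  exact ⟨.app f ts, Tm.eval_app M _ f ts⟩

abbrev groundSubmodel (M : Interp F) (hground : Nonempty (Tm Empty F)) : Interp F where
  U := M.groundRange
  ne := hground.map fun t => ⟨_, t, rfl⟩
  fn f us :=
    ⟨M.fn f (us.map Subtype.val), M.fn_mem_groundRange f (List.forall_mem_map.2 fun u _ => u.2)⟩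

variable (M : Interp F) (hground : Nonempty (Tm Empty F)) {V : Type}
  (ξ : V → (M.groundSubmodel hground).U)

theorem val_eval_groundSubmodel : ∀ t : Tm V F,
    Subtype.val (t.eval (M.groundSubmodel hground) ξ) = t.eval M (fun x => Subtype.val (ξ x))
  | .var x => by rw [Tm.eval, Tm.eval]
  | .app f ts => by
      rw [Tm.eval_app, Tm.eval_app]
      show M.fn f ((ts.map _).map Subtype.val) = _
      rw [List.map_map]
      exact congrArg (M.fn f)
        (List.map_congr_left fun t _ => val_eval_groundSubmodel t)

theorem lit_holds_groundSubmodel (L : Lit V F) :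
    L.holds (M.groundSubmodel hground) ξ ↔ L.holds M (fun x => Subtype.val (ξ x)) := by
  unfold Lit.holds
  rw [← val_eval_groundSubmodel, ← val_eval_groundSubmodel]
  cases L.pos
  · exact not_congr Subtype.ext_iff
  · exact Subtype.ext_iff

theorem clause_holds_groundSubmodel (C : Clause V F) :
    C.holds (M.groundSubmodel hground) ξ ↔ C.holds M (fun x => Subtype.val (ξ x)) := by
  simp only [Clause.holds, lit_holds_groundSubmodel]

end Interp

theorem stmt_10 {V F : Type} (N : Set (Clause V F))
    (hground : Nonempty (Tm Empty F)) :
    (¬ ∃ M : Interp F, ∀ D ∈ {D : Clause Empty F |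
        ∃ C ∈ N, ∃ θ : V → Tm Empty F, D = C.map (Lit.subst θ)},
      Clause.holds M (fun e => e.elim) D)
    ↔ (¬ ∃ M : Interp F, ∀ C ∈ N, ∀ ξ : V → M.U, Clause.holds M ξ C) := by
  rw [not_iff_not]
  constructor
  · rintro ⟨M, hM⟩
    refine ⟨M.groundSubmodel hground, fun C hC ξ => ?_⟩
    choose θ hθ using fun x => (ξ x).2
    have hinst := hM _ ⟨C, hC, θ, rfl⟩
    rw [Clause.holds_map_subst] at hinst
    rw [Interp.clause_holds_groundSubmodel]
    convert hinst using 2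
    exact (hθ _).symm
  · rintro ⟨M, hM⟩
    refine ⟨M, ?_⟩
    rintro _ ⟨C, hC, θ, rfl⟩
    exact (Clause.holds_map_subst M _ θ C).2 (hM C hC _)
end

section
/- Soundness of the Decompose rule: the clause C' ∨ f(t₁,…,tₙ) ≉ f(s₁,…,sₙ) entails the clause C' ∨ t₁ ≉ s₁ ∨ … ∨ tₙ ≉ sₙ in every first-order interpretation with congruent interpretation of function symbols. -/
theorem stmt_17 {V F : Type} (C' : Clause V F) (f : F)
    (ts ss : List (Tm V F)) (hlen : ts.length = ss.length)
    (M : Interp F) (ξ : V → M.U)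
    (h : Clause.holds M ξ (C' ++ [⟨false, Tm.app f ts, Tm.app f ss⟩])) :
    Clause.holds M ξ
      (C' ++ (ts.zip ss).map fun p => (⟨false, p.1, p.2⟩ : Lit V F)) := by
  obtain ⟨L, hL, hLh⟩ := h
  rcases List.mem_append.1 hL with hL | hL
  · exact ⟨L, List.mem_append_left _ hL, hLh⟩
  · simp at hL
    subst hL
    by_contra hcon
    unfold Clause.holds at hcon
    push_neg at hcon
    apply hLh
    show Tm.eval M ξ (.app f ts) = Tm.eval M ξ (.app f ss)
    rw [Tm.eval, Tm.eval]
    congr 1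
    simp only [List.attach_map_val, List.map_map]
    apply List.ext_getElem (by simpa using hlen)
    intro i h1 h2
    simp only [List.length_map] at h1 h2
    simp only [List.getElem_map]
    have hi : ts.length ≤ (ts.zip ss).length := by simp [hlen]
    have hmem : (⟨false, ts[i]'h1, ss[i]'h2⟩ : Lit V F)
        ∈ (ts.zip ss).map fun p => (⟨false, p.1, p.2⟩ : Lit V F) := by
      refine List.mem_map.2 ⟨(ts.zip ss)[i]'(by simp [hlen]; omega), List.getElem_mem _, ?_⟩
      simp
    have := hcon _ (List.mem_append_right _ hmem)
    simp [Lit.holds] at this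
    exact this
end
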